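/- Let F be a subfield of a field H and let n ≥ 3 be a natural number. If L is a normal subgroup of STP(n,H) whose intersection with UT(n,H) is non-trivial, then the intersection of L with UT(n,F) is also non-trivial. -/

import Mathlib

noncomputable section

open Matrix

/-- The special upper triangular group `STP(n, F)`: the subgroup of the special linear
group `SL(n, F)` consisting of upper triangular matrices. -/
def STP (n : ℕ) (F : Type*) [Field F] : Subgroup (Matrix.SpecialLinearGroup (Fin n) F) where
  carrier := { A | (A : Matrix (Fin n) (Fin n) F).BlockTriangular id }
  one_mem' := by
    simpa only [Set.mem_setOf_eq, Matrix.SpecialLinearGroup.coe_one] using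
      Matrix.blockTriangular_one
  mul_mem' := by
    intro a b ha hb
    simpa only [Set.mem_setOf_eq, Matrix.SpecialLinearGroup.coe_mul] using ha.mul hb
  inv_mem' := by
    intro a ha
    simp only [Set.mem_setOf_eq] at ha ⊢
    have hdet : IsUnit (a : Matrix (Fin n) (Fin n) F).det := by
      rw [a.prop]; exact isUnit_one
    haveI := Matrix.invertibleOfIsUnitDet _ hdet
    have h1 : (↑(a⁻¹) : Matrix (Fin n) (Fin n) F) = (↑a : Matrix (Fin n) (Fin n) F)⁻¹ := by
      rw [Matrix.SpecialLinearGroup.coe_inv, Matrix.inv_def, a.prop, Ring.inverse_one, one_smul]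
    rw [h1]
    exact Matrix.blockTriangular_inv_of_blockTriangular ha

/-- The product (pointwise) topology on `n × n` matrices over a topological field. -/
def matrixTop (n : ℕ) (F : Type*) (t : TopologicalSpace F) :
    TopologicalSpace (Matrix (Fin n) (Fin n) F) :=
  @Pi.topologicalSpace _ _ fun _ => @Pi.topologicalSpace _ _ fun _ => t

/-- The pointwise topology on `SL(n, F)`, induced from `F ^ (n²)`. -/
def SLtop (n : ℕ) (F : Type*) [Field F] (t : TopologicalSpace F) :
    TopologicalSpace (Matrix.SpecialLinearGroup (Fin n) F) :=
  (matrixTop n F t).induced ((↑) : Matrix.SpecialLinearGroup (Fin n) F → Matrix (Fin n) (Fin n) F)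

/-- The subspace topology on `STP(n, F) ⊆ SL(n, F)`. -/
def STPtop (n : ℕ) (F : Type*) [Field F] (t : TopologicalSpace F) :
    TopologicalSpace (STP n F) :=
  (SLtop n F t).induced ((↑) : STP n F → Matrix.SpecialLinearGroup (Fin n) F)

/-- A Hausdorff topological group `(G, t)` is (topologically) minimal if `G` admits no
strictly coarser Hausdorff group topology. -/
def IsMinimalTopGroup (G : Type*) [Group G] (t : TopologicalSpace G) : Prop :=
  @IsTopologicalGroup G t _ ∧ @T2Space G t ∧
    ∀ t' : TopologicalSpace G, t ≤ t' → @IsTopologicalGroup G t' _ → @T2Space G t' → t' = t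

/-- A Hausdorff topological group `(G, t)` is totally minimal if every continuous surjective
group homomorphism onto a Hausdorff topological group is open. -/
def IsTotallyMinimalTopGroup (G : Type*) [Group G] (t : TopologicalSpace G) : Prop :=
  @IsTopologicalGroup G t _ ∧ @T2Space G t ∧
    ∀ (H : Type*) (_ : Group H) (tH : TopologicalSpace H),
      @IsTopologicalGroup H tH _ → @T2Space H tH → ∀ f : G →* H,
        @Continuous _ _ t tH f → Function.Surjective f → @IsOpenMap _ _ t tH f

/-- A minimal topological group `(G, t)` is perfectly minimal if its product with any
minimal topological group is minimal. -/
def IsPerfectlyMinimalTopGroup (G : Type*) [Group G] (t : TopologicalSpace G) : Prop :=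
  IsMinimalTopGroup G t ∧
    ∀ (H : Type*) (_ : Group H) (tH : TopologicalSpace H), IsMinimalTopGroup H tH →
      IsMinimalTopGroup (G × H) (@instTopologicalSpaceProd _ _ t tH)

/-- The Gaussian rational field `ℚ(i)`: the subfield of `ℂ` generated by `i`. -/
def QI : Subfield ℂ := Subfield.closure {Complex.I}

/-- `ρ m = e^{2πi/m}`, a primitive `m`-th root of unity in `ℂ`. -/
def rho (m : ℕ) : ℂ := Complex.exp (2 * Real.pi * Complex.I / m)

/-- The `p`-adic topology on `ℚ`: the topology induced from `ℚ_p`. -/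
def padicTopology (p : ℕ) (hp : p.Prime) : TopologicalSpace ℚ :=
  haveI : Fact p.Prime := ⟨hp⟩
  TopologicalSpace.induced ((↑) : ℚ → ℚ_[p]) inferInstance

/-!
Push `L` into `SL(n, H)`; its image `K` is normalized by `STP(n, H)`. For a unitriangular
`g ∈ K`, `g ≠ 1`, the commutator of `g` with `1 + E_{j,n}`, for a column `j < n` in which `g - 1`
is nonzero, is `1 + d e_nᵀ` with `d_n = 0`: it is supported in the last column. Its commutator
with `1 + E_{1,k}`, for some `k > 1` with `d_k ≠ 0`, is the transvection `1 + d_k E_{1,n}`; if no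
such `k` exists the element already has this form. Finally conjugation by
`diag(c⁻¹, c, 1, …, 1)`, which has determinant one thanks to the third index (`n ≥ 3`), turns
`1 + c E_{1,n}` into `1 + E_{1,n}`, whose entries `0` and `1` lie in `F`.
-/

open scoped commutatorElement

section RingIdentities

/- Both identities have the shape `m * (b * a) = a * b`, i.e. `⁅a, b⁆ = m` once `a` and `b` are
units: they compute the two commutators of the argument. -/

variable {R : Type*} [Ring R]

theorem one_add_sub_one_mul_mul_eq {a s : R} (hsa : s * a = s) (hss : s * s = 0) :
    (1 + (a - 1) * s) * ((1 + s) * a) = a * (1 + s) := by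
  have h1 : (a - 1) * s * a = (a - 1) * s := by rw [mul_assoc, hsa]
  have h2 : (a - 1) * s * s = 0 := by rw [mul_assoc, hss, mul_zero]
  calc (1 + (a - 1) * s) * ((1 + s) * a)
      = a + s * a + (a - 1) * s * a + (a - 1) * s * s * a := by noncomm_ring
    _ = a * (1 + s) := by rw [hsa, h1, h2]; noncomm_ring

theorem one_add_mul_mul_eq {t x u : R} (htx : t * x = u) (hxt : x * t = 0) (hux : u * x = 0)
    (hut : u * t = 0) :
    (1 + u) * ((1 + x) * (1 + t)) = (1 + t) * (1 + x) := by
  subst htx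
  calc (1 + t * x) * ((1 + x) * (1 + t))
      = 1 + x + t + x * t + t * x + t * x * x + t * x * t + t * x * x * t := by noncomm_ring
    _ = (1 + t) * (1 + x) := by rw [hxt, hux, hut, zero_mul]; noncomm_ring

end RingIdentities

theorem map_commutatorElement_eq_of_mul_eq {G M : Type*} [Group G] [Monoid M] (f : G →* M)
    {a b : G} {m : M} (h : m * f (b * a) = f (a * b)) : f ⁅a, b⁆ = m := by
  rw [show ⁅a, b⁆ = a * b * (b * a)⁻¹ by group, map_mul, ← h, mul_assoc, ← map_mul,
    mul_inv_cancel, map_one, mul_one]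

theorem Matrix.vecMulVec_single_single {m n α : Type*} [DecidableEq m] [DecidableEq n]
    [MulZeroClass α] (i : m) (j : n) (a b : α) :
    vecMulVec (Pi.single i a) (Pi.single j b) = single i j (a * b) := by
  ext p q
  simp only [vecMulVec_apply, Pi.single_apply, single_apply]
  split_ifs <;> simp_all

theorem Matrix.eq_vecMulVec_col_of_col_eq_zero {m n α : Type*} [DecidableEq n]
    [MulZeroOneClass α] {N : Matrix m n α} {l : n} (h : ∀ j ≠ l, N.col j = 0) :
    N = vecMulVec (N.col l) (Pi.single l 1) := by
  ext i j
  rcases eq_or_ne j l with rfl | hj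
  · rw [vecMulVec_apply, Pi.single_eq_same, mul_one, col_apply]
  · rw [vecMulVec_apply, Pi.single_eq_of_ne hj, mul_zero]
    exact congrFun (h j hj) i

theorem Matrix.BlockTriangular.row_last_eq_single {R : Type*} [Zero R] [One R] {n : ℕ}
    {A : Matrix (Fin (n + 1)) (Fin (n + 1)) R} (hA : A.BlockTriangular id)
    (hdiag : ∀ i, A i i = 1) : A.row (Fin.last n) = Pi.single (Fin.last n) 1 := by
  ext j
  rcases eq_or_ne j (Fin.last n) with rfl | hj
  · simp [hdiag]
  · simp only [row_apply, Pi.single_apply, hj, if_false]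
    exact hA (Fin.lt_last_iff_ne_last.mpr hj)

namespace Matrix.SpecialLinearGroup

section Transvections

variable {ι F : Type*} [Fintype ι] [DecidableEq ι] [Field F]

theorem diag2n_mul_transvection_mul_inv {i j k : ι} (hij : i ≠ j) (hik : i ≠ k) (hjk : j ≠ k)
    {a : F} (ha : a ≠ 0) (c : F) :
    diag2n hik a ha * transvection hij c * (diag2n hik a ha)⁻¹ = transvection hij (a * c) := by
  rw [mul_inv_eq_iff_eq_mul]
  ext p q
  simp only [coe_mul, diag2n_coe, transvection_coe, diagonal_mul, mul_diagonal, add_apply,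
    one_apply, single_apply]
  rcases eq_or_ne p q with rfl | hpq
  · have hip : ¬(i = p ∧ j = p) := fun h => hij (h.1.trans h.2.symm)
    simp [hip]
  · by_cases hpq' : i = p ∧ j = q
    · obtain ⟨rfl, rfl⟩ := hpq'
      simp [hij, hij.symm, hjk]
    · simp [hpq, hpq']

theorem transvection_apply_mem {S : Type*} [SetLike S F] [SubringClass S F] (R : S) {i j : ι}
    (hij : i ≠ j) {c : F} (hc : c ∈ R) (p q : ι) : transvection hij c p q ∈ R := by
  rw [transvection_coe, add_apply, one_apply, single_apply]
  exact add_mem (by split_ifs <;> simp) (by split_ifs <;> simp [hc])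

theorem transvection_apply_self {i j : ι} (hij : i ≠ j) (c : F) (p : ι) :
    transvection hij c p p = 1 := by
  rw [transvection_coe, add_apply, one_apply_eq,
    single_apply_of_ne (h := fun h => hij (h.1.trans h.2.symm)), add_zero]

theorem transvection_ne_one {i j : ι} (hij : i ≠ j) {c : F} (hc : c ≠ 0) :
    transvection hij c ≠ 1 := fun h =>
  hc ((transvection_mem_center_iff hij c).mp (h ▸ Subgroup.one_mem _))

end Transvections

end Matrix.SpecialLinearGroup

namespace STP

open Matrix.SpecialLinearGroup

variable {n : ℕ} {H : Type*} [Field H]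

theorem transvection_mem {i j : Fin n} (hij : i < j) (c : H) :
    transvection hij.ne c ∈ STP n H :=
  blockTriangular_one.add (blockTriangular_single hij.le c)

theorem diag2n_mem {i j : Fin n} (hij : i ≠ j) {a : H} (ha : a ≠ 0) :
    diag2n hij a ha ∈ STP n H :=
  blockTriangular_diagonal _

theorem exists_mem_eq_one_add_vecMulVec
    {K : Subgroup (Matrix.SpecialLinearGroup (Fin (n + 1)) H)}
    (hK : STP (n + 1) H ≤ Subgroup.normalizer K) {g : Matrix.SpecialLinearGroup (Fin (n + 1)) H}
    (hgK : g ∈ K) (hg : g ∈ STP (n + 1) H) (hdiag : ∀ i, g i i = 1) (hg1 : g ≠ 1) :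
    ∃ b ∈ K, ∃ d : Fin (n + 1) → H, d (Fin.last n) = 0 ∧ d ≠ 0 ∧
      (b : Matrix (Fin (n + 1)) (Fin (n + 1)) H) =
        1 + vecMulVec d (Pi.single (Fin.last n) 1) := by
  set A : Matrix (Fin (n + 1)) (Fin (n + 1)) H := ↑g
  have hN : A - 1 ≠ 0 := sub_ne_zero.mpr fun h => hg1 (Subtype.ext h)
  have hlast : ∀ j, (A - 1).col j (Fin.last n) = 0 := fun j => by
    have hrow : A (Fin.last n) j = (Pi.single (Fin.last n) 1 : Fin (n + 1) → H) j :=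
      congrFun (hg.row_last_eq_single hdiag) j
    rw [col_apply, Matrix.sub_apply, hrow, Pi.single_apply, one_apply]
    simp [eq_comm]
  by_cases hcol : ∃ j ≠ Fin.last n, (A - 1).col j ≠ 0
  · obtain ⟨j, hjl, hj⟩ := hcol
    have hjl : j < Fin.last n := Fin.lt_last_iff_ne_last.mpr hjl
    refine ⟨⁅g, transvection hjl.ne 1⁆,
      Subgroup.le_normalizer_iff_commutator_le_left.mp hK
        (Subgroup.commutator_mem_commutator hgK (transvection_mem hjl 1)),
      (A - 1).col j, hlast j, hj, ?_⟩
    have hS : vecMulVec ((A - 1).col j) (Pi.single (Fin.last n) 1) =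
        (A - 1) * single j (Fin.last n) 1 := by
      rw [single_eq_single_vecMulVec_single, mul_vecMulVec, mulVec_single_one]
    have hSA : single j (Fin.last n) (1 : H) * A = single j (Fin.last n) 1 := by
      rw [single_eq_single_vecMulVec_single, vecMulVec_mul, single_one_vecMul,
        hg.row_last_eq_single hdiag]
    rw [hS]
    refine map_commutatorElement_eq_of_mul_eq
      (coeMonoidHom : Matrix.SpecialLinearGroup (Fin (n + 1)) H →* _) ?_
    simp only [map_mul, coeMonoidHom_apply, transvection_coe]
    exact one_add_sub_one_mul_mul_eq hSA (single_mul_single_of_ne _ _ _ _ hjl.ne' 1)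
  · push Not at hcol
    have hNcol := eq_vecMulVec_col_of_col_eq_zero hcol
    refine ⟨g, hgK, (A - 1).col (Fin.last n), hlast _, fun h => hN ?_, ?_⟩
    · rw [hNcol, h, zero_vecMulVec]
    · rw [← hNcol, add_sub_cancel]

theorem exists_transvection_mem [NeZero n]
    {K : Subgroup (Matrix.SpecialLinearGroup (Fin (n + 1)) H)}
    (hK : STP (n + 1) H ≤ Subgroup.normalizer K) {b : Matrix.SpecialLinearGroup (Fin (n + 1)) H}
    (hbK : b ∈ K) {d : Fin (n + 1) → H} (hdl : d (Fin.last n) = 0) (hd : d ≠ 0)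
    (hb : (b : Matrix (Fin (n + 1)) (Fin (n + 1)) H) =
      1 + vecMulVec d (Pi.single (Fin.last n) 1)) :
    ∃ c ≠ 0, transvection Fin.last_pos'.ne c ∈ K := by
  have hl0 : Fin.last n ≠ 0 := Fin.last_pos'.ne'
  by_cases hdk : ∃ k ≠ 0, d k ≠ 0
  · obtain ⟨k, hk0, hdk⟩ := hdk
    have hk : 0 < k := (Fin.pos_iff_ne_zero' k).mpr hk0
    have htx : single (0 : Fin (n + 1)) k (1 : H) * vecMulVec d (Pi.single (Fin.last n) 1) =
        single (0 : Fin (n + 1)) (Fin.last n) (d k) := by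
      rw [single_eq_single_vecMulVec_single, vecMulVec_mul_vecMulVec, single_one_dotProduct,
        vecMulVec_smul, ← single_eq_single_vecMulVec_single, smul_single, smul_eq_mul, mul_one]
    have hxt :
        vecMulVec d (Pi.single (Fin.last n) 1) * single (0 : Fin (n + 1)) k (1 : H) = 0 := by
      rw [single_eq_single_vecMulVec_single, vecMulVec_mul_vecMulVec, single_one_dotProduct,
        Pi.single_eq_of_ne hl0, zero_smul, vecMulVec_zero]
    have hux : single (0 : Fin (n + 1)) (Fin.last n) (d k) *
        vecMulVec d (Pi.single (Fin.last n) 1) = 0 := by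
      rw [mul_vecMulVec, single_mulVec, hdl, mul_zero]
      simp
    have hcomm : ⁅transvection hk.ne (1 : H), b⁆ = transvection Fin.last_pos'.ne (d k) := by
      apply Subtype.ext
      refine map_commutatorElement_eq_of_mul_eq
        (coeMonoidHom : Matrix.SpecialLinearGroup (Fin (n + 1)) H →* _) ?_
      simp only [map_mul, coeMonoidHom_apply, transvection_coe, hb]
      exact one_add_mul_mul_eq htx hxt hux (single_mul_single_of_ne _ _ _ _ hl0 _)
    refine ⟨d k, hdk, ?_⟩
    rw [← hcomm]
    exact Subgroup.le_normalizer_iff_commutator_le_right.mp hK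
      (Subgroup.commutator_mem_commutator (transvection_mem hk 1) hbK)
  · push Not at hdk
    have hd0 : d = Pi.single 0 (d 0) := funext fun k => by
      rcases eq_or_ne k 0 with rfl | hk
      · simp
      · rw [hdk k hk, Pi.single_eq_of_ne hk]
    refine ⟨d 0, fun h => hd (by rw [hd0, h, Pi.single_zero]), ?_⟩
    convert hbK
    apply Subtype.ext
    rw [transvection_coe, hb, hd0, vecMulVec_single_single, mul_one, Pi.single_eq_same]

theorem transvection_one_mem {K : Subgroup (Matrix.SpecialLinearGroup (Fin n) H)}
    (hK : STP n H ≤ Subgroup.normalizer K) {i j k : Fin n} (hij : i ≠ j) (hik : i ≠ k)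
    (hjk : j ≠ k) {c : H} (hc : c ≠ 0) (h : transvection hij c ∈ K) :
    transvection hij 1 ∈ K := by
  have := (Subgroup.mem_normalizer_iff.mp (hK (diag2n_mem hik (inv_ne_zero hc))) _).mp h
  rwa [diag2n_mul_transvection_mul_inv hij hik hjk, inv_mul_cancel₀ hc] at this

end STP

theorem stmt_1 (H : Type*) [Field H] (F : Subfield H) (n : ℕ) (hn : 3 ≤ n)
    (L : Subgroup ↥(STP n H)) (hL : L.Normal)
    (hint : ∃ A : STP n H, A ∈ L ∧ A ≠ 1 ∧
      ∀ i : Fin n,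
        ((A : Matrix.SpecialLinearGroup (Fin n) H) : Matrix (Fin n) (Fin n) H) i i = 1) :
    ∃ A : STP n H, A ∈ L ∧ A ≠ 1 ∧
      (∀ i : Fin n,
        ((A : Matrix.SpecialLinearGroup (Fin n) H) : Matrix (Fin n) (Fin n) H) i i = 1) ∧
      ∀ i j : Fin n,
        ((A : Matrix.SpecialLinearGroup (Fin n) H) : Matrix (Fin n) (Fin n) H) i j ∈ F := by
  obtain ⟨m, rfl⟩ : ∃ m, n = m + 3 := ⟨n - 3, by omega⟩
  obtain ⟨A, hAL, hA1, hAdiag⟩ := hint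
  set K := L.map (STP (m + 3) H).subtype
  have hK : STP (m + 3) H ≤ Subgroup.normalizer K := by
    simpa [K, Subgroup.normalizer_eq_top, ← MonoidHom.range_eq_map] using
      Subgroup.le_normalizer_map (H := L) (STP (m + 3) H).subtype
  obtain ⟨b, hbK, d, hdl, hd, hb⟩ := STP.exists_mem_eq_one_add_vecMulVec hK
    (Subgroup.mem_map_of_mem _ hAL) A.2 hAdiag (by simpa using hA1)
  obtain ⟨c, hc, hcK⟩ := STP.exists_transvection_mem hK hbK hdl hd hb
  have hzl : (0 : Fin (m + 3)) < Fin.last (m + 2) := Fin.last_pos'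
  have hmem := STP.transvection_one_mem hK hzl.ne (k := 1) (by simp) (by simp [Fin.ext_iff])
    hc hcK
  refine ⟨⟨_, STP.transvection_mem hzl 1⟩,
    (Subgroup.mem_map_iff_mem (Subgroup.subtype_injective _)).mp hmem,
    fun h => SpecialLinearGroup.transvection_ne_one hzl.ne one_ne_zero (congrArg Subtype.val h),
    fun i => SpecialLinearGroup.transvection_apply_self hzl.ne 1 i,
    fun i j => SpecialLinearGroup.transvection_apply_mem F hzl.ne (one_mem F) i j⟩
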